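/- With J the maximal block Jacobi operator as above, if z ∈ ℂ is in the resolvent set of J (J − zI is bijective from Dom(J) onto ℓ²), then dim GEV_{ℓ²}(z) = d exactly. -/

import Mathlib

open Matrix

/-- The formal block Jacobi operator: `(𝒥u)₀ = B₀u₀ + A₀u₁`,
`(𝒥u)_n = A_{n−1}* u_{n−1} + B_n u_n + A_n u_{n+1}` for `n ≥ 1`. -/
noncomputable def jacobiAct {d : ℕ} (A B : ℕ → Matrix (Fin d) (Fin d) ℂ)
    (u : ℕ → Fin d → ℂ) : ℕ → Fin d → ℂ
  | 0 => (B 0).mulVec (u 0) + (A 0).mulVec (u 1)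
  | n + 1 => (A n)ᴴ.mulVec (u n) + (B (n + 1)).mulVec (u (n + 1))
      + (A (n + 1)).mulVec (u (n + 2))

/-- Square-summability of a `ℂ^d`-valued sequence (with the Euclidean norm on `ℂ^d`). -/
def IsL2 {d : ℕ} (u : ℕ → Fin d → ℂ) : Prop :=
  Memℓp (fun n => (WithLp.equiv 2 (Fin d → ℂ)).symm (u n)) 2

/-- The space `GEV_{ℓ²}(z)` of square-summable generalized eigenvectors. -/
noncomputable def GEVl2 (d : ℕ) (A B : ℕ → Matrix (Fin d) (Fin d) ℂ) (z : ℂ) :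
    Submodule ℂ (ℕ → (Fin d → ℂ)) where
  carrier := {u | (∀ n : ℕ, 1 ≤ n → jacobiAct A B u n = z • u n) ∧ IsL2 u}
  add_mem' := by
    rintro u v ⟨hu1, hu2⟩ ⟨hv1, hv2⟩
    refine ⟨fun n hn => ?_, by
      have h := hu2.add hv2
      unfold IsL2 at *
      convert h using 1
      funext n
      simp [WithLp.equiv_symm_apply]⟩
    cases n with
    | zero => omega
    | succ m =>
      have hu := hu1 (m + 1) (by omega)
      have hv := hv1 (m + 1) (by omega)
      simp only [jacobiAct, Pi.add_apply, Matrix.mulVec_add, smul_add] at hu hv ⊢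
      rw [← hu, ← hv]; abel
  zero_mem' := by
    refine ⟨fun n hn => ?_, zero_memℓp⟩
    cases n with
    | zero => omega
    | succ m => simp [jacobiAct]
  smul_mem' := by
    rintro c u ⟨hu1, hu2⟩
    refine ⟨fun n hn => ?_, hu2.const_smul c⟩
    cases n with
    | zero => omega
    | succ m =>
      have hu := hu1 (m + 1) (by omega)
      simp only [jacobiAct, Pi.smul_apply, Matrix.mulVec_smul] at hu ⊢
      rw [smul_comm z c, ← hu]
      simp [smul_add]

/-! The boundary map `u ↦ ((𝒥 - z) u)₀` is an isomorphism `GEV_{ℓ²}(z) ≃ ℂ^d`. A vector in its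
kernel solves `𝒥 u = z u` in `ℓ²`, i.e. lies in the kernel of `J - z`, so it vanishes; and the
solution of `(J - z) u = δ₀ w` is a generalized eigenvector with boundary value `w`. -/

theorem eq_pi_single_self_iff {ι M : Type*} [DecidableEq ι] [Zero M] (f : ι → M) (i : ι) :
    f = Pi.single i (f i) ↔ ∀ j ≠ i, f j = 0 := by
  refine ⟨fun h j hj => by rw [h, Pi.single_eq_of_ne hj], fun h => funext fun j => ?_⟩
  rcases eq_or_ne j i with rfl | hj
  · rw [Pi.single_eq_same]
  · rw [Pi.single_eq_of_ne hj, h j hj]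

section

variable {d : ℕ}

theorem IsL2.add {u v : ℕ → Fin d → ℂ} (hu : IsL2 u) (hv : IsL2 v) : IsL2 (u + v) := by
  unfold IsL2 at *
  convert hu.add hv using 1
  funext n
  simp [WithLp.equiv_symm_apply]

theorem IsL2.const_smul {u : ℕ → Fin d → ℂ} (hu : IsL2 u) (c : ℂ) : IsL2 (c • u) := by
  unfold IsL2 at *
  convert hu.const_smul c using 1
  funext n
  simp [WithLp.equiv_symm_apply]

theorem isL2_pi_single (i : ℕ) (w : Fin d → ℂ) : IsL2 (Pi.single i w) := by
  refine Memℓp.of_exponent_ge (memℓp_zero_iff.2 ((Set.finite_singleton i).subset ?_)) (by norm_num)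
  intro n hn
  simp_all [Pi.single_apply]

variable (A B : ℕ → Matrix (Fin d) (Fin d) ℂ) (z : ℂ)

noncomputable def jacobiLinearMap : (ℕ → Fin d → ℂ) →ₗ[ℂ] (ℕ → Fin d → ℂ) where
  toFun := jacobiAct A B
  map_add' u v := by
    funext n
    cases n <;> simp only [jacobiAct, Pi.add_apply, mulVec_add] <;> abel
  map_smul' c u := by
    funext n
    cases n <;> simp [jacobiAct, mulVec_smul, smul_add]

theorem jacobiAct_zero_right : jacobiAct A B 0 = 0 :=
  (jacobiLinearMap A B).map_zero

theorem mem_GEVl2_iff {u : ℕ → Fin d → ℂ} :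
    u ∈ GEVl2 d A B z ↔
      IsL2 u ∧ jacobiAct A B u - z • u = Pi.single 0 ((jacobiAct A B u - z • u) 0) := by
  rw [eq_pi_single_self_iff, and_comm]
  simp only [Pi.sub_apply, Pi.smul_apply, sub_eq_zero, ← Nat.one_le_iff_ne_zero]
  rfl

noncomputable def gevl2Boundary : GEVl2 d A B z →ₗ[ℂ] (Fin d → ℂ) :=
  LinearMap.proj 0 ∘ₗ (jacobiLinearMap A B - z • LinearMap.id) ∘ₗ (GEVl2 d A B z).subtype

theorem gevl2Boundary_apply (u : GEVl2 d A B z) :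
    gevl2Boundary A B z u = (jacobiAct A B u - z • (u : ℕ → Fin d → ℂ)) 0 :=
  rfl

theorem gevl2Boundary_injective
    (hz : ∀ u : ℕ → Fin d → ℂ, IsL2 u → jacobiAct A B u = z • u → u = 0) :
    Function.Injective (gevl2Boundary A B z) := by
  rw [injective_iff_map_eq_zero]
  rintro ⟨u, hu⟩ h0
  have hJu : jacobiAct A B u - z • u = 0 := by
    rw [((mem_GEVl2_iff A B z).1 hu).2, ← gevl2Boundary_apply A B z ⟨u, hu⟩, h0, Pi.single_zero]
  exact Subtype.ext (hz u ((mem_GEVl2_iff A B z).1 hu).1 (sub_eq_zero.1 hJu))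

theorem gevl2Boundary_surjective
    (hz : ∀ w, ∃ u : ℕ → Fin d → ℂ, IsL2 u ∧ jacobiAct A B u - z • u = Pi.single 0 w) :
    Function.Surjective (gevl2Boundary A B z) := by
  intro w
  obtain ⟨u, hu, hJu⟩ := hz w
  have hJu0 : (jacobiAct A B u - z • u) 0 = w := by rw [hJu, Pi.single_eq_same]
  exact ⟨⟨u, (mem_GEVl2_iff A B z).2 ⟨hu, hJu0.symm ▸ hJu⟩⟩, hJu0⟩

end

theorem rank_gevl2_eq_general (d : ℕ) (A B : ℕ → Matrix (Fin d) (Fin d) ℂ)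
    (z : ℂ)
    (hz : ∀ f : ℕ → Fin d → ℂ, IsL2 f →
      ∃! u : ℕ → Fin d → ℂ,
        (IsL2 u ∧ IsL2 (jacobiAct A B u)) ∧ jacobiAct A B u - z • u = f) :
    Module.rank ℂ (GEVl2 d A B z) = d := by
  have hzero : IsL2 (0 : ℕ → Fin d → ℂ) := zero_memℓp
  have hinj : Function.Injective (gevl2Boundary A B z) :=
    gevl2Boundary_injective A B z fun u hu hJu => (hz 0 hzero).unique
      ⟨⟨hu, hJu ▸ hu.const_smul z⟩, sub_eq_zero.2 hJu⟩
      ⟨⟨hzero, (jacobiAct_zero_right A B).symm ▸ hzero⟩, by simp [jacobiAct_zero_right]⟩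
  have hsurj : Function.Surjective (gevl2Boundary A B z) :=
    gevl2Boundary_surjective A B z fun w =>
      (hz _ (isL2_pi_single 0 w)).exists.imp fun _ hu => ⟨hu.1.1, hu.2⟩
  rw [(LinearEquiv.ofBijective _ ⟨hinj, hsurj⟩).rank_eq, rank_fin_fun]

/-- If `z` belongs to the resolvent set of the maximal block Jacobi operator `J`
(i.e. `J − zI` is a bijection from `Dom(J) = {u ∈ ℓ² : 𝒥u ∈ ℓ²}` onto `ℓ²`), then the
space of square-summable generalized eigenvectors for `z` has dimension exactly `d`. -/
theorem rank_gevl2_eq (d : ℕ) (A B : ℕ → Matrix (Fin d) (Fin d) ℂ)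
    (hA : ∀ n, IsUnit (A n).det) (hB : ∀ n, (B n).IsHermitian) (z : ℂ)
    (hz : ∀ f : ℕ → Fin d → ℂ, IsL2 f →
      ∃! u : ℕ → Fin d → ℂ,
        (IsL2 u ∧ IsL2 (jacobiAct A B u)) ∧ jacobiAct A B u - z • u = f) :
    Module.rank ℂ (GEVl2 d A B z) = d :=
  rank_gevl2_eq_general d A B z hz
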